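/- arXiv:1710.04395 — 4 statements merged into one kernel-verified Lean document; each statement's English description precedes it below -/
import Mathlib

section
/- Let K be a nondegenerate triangle in ℝ². Then ρ_K²/|K| ≥ 1/6. If moreover θ⋆ ∈ (0, π/2) and every interior angle of K is at least θ⋆, then ρ_K²/|K| ≤ 1/(3 tan θ⋆). -/
/-!
An affine change of variables maps the standard triangle `{x, y ≥ 0, x + y ≤ 1}` onto `K` with
Jacobian `D = |cross u v|`, where `u = W₁ - W₀` and `v = W₂ - W₀`. The second moments of the
standard triangle about its centroid then give `|K| = D / 2` and `ρ_K² = P / 18` with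
`P = ‖u‖² - ⟪u, v⟫ + ‖v‖²`, so that `ρ_K² / |K| = P / (9 D)`. The lower bound is the elementary
inequality `3 D ≤ 2 P`. For the upper bound, `P` is the sum over the three vertices of the inner
product of the two edges leaving that vertex, and at a vertex of angle `α ≥ θ⋆` this inner
product equals `D cot α ≤ D cot θ⋆`.
-/

open MeasureTheory Real Set InnerProductGeometry
open scoped RealInnerProductSpace EuclideanGeometry

local notation "ℝ²" => EuclideanSpace ℝ (Fin 2)

lemma integral_cubic (a b c d B : ℝ) :
    ∫ x in (0 : ℝ)..B, (a * x ^ 3 + b * x ^ 2 + c * x + d) =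
      a * B ^ 4 / 4 + b * B ^ 3 / 3 + c * B ^ 2 / 2 + d * B := by
  have hderiv (x : ℝ) : HasDerivAt (fun x => a * x ^ 4 / 4 + b * x ^ 3 / 3 + c * x ^ 2 / 2 + d * x)
      (a * x ^ 3 + b * x ^ 2 + c * x + d) x := by
    refine (((((hasDerivAt_pow 4 x).const_mul a).div_const 4).fun_add
      (((hasDerivAt_pow 3 x).const_mul b).div_const 3)).fun_add
      (((hasDerivAt_pow 2 x).const_mul c).div_const 2)).fun_add
      ((hasDerivAt_id' x).const_mul d) |>.congr_deriv ?_
    norm_num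
    ring
  rw [intervalIntegral.integral_eq_sub_of_hasDerivAt (fun x _ => hderiv x)
    ((by fun_prop : Continuous _).intervalIntegrable _ _)]
  ring

lemma norm_smul_add_smul_sq {V : Type*} [NormedAddCommGroup V] [InnerProductSpace ℝ V]
    (u v : V) (a b : ℝ) :
    ‖a • u + b • v‖ ^ 2 = ‖u‖ ^ 2 * a ^ 2 + 2 * ⟪u, v⟫ * (a * b) + ‖v‖ ^ 2 * b ^ 2 := by
  rw [norm_add_sq_real, norm_smul, norm_smul, real_inner_smul_left, real_inner_smul_right,
    mul_pow, mul_pow, norm_eq_abs, norm_eq_abs, sq_abs, sq_abs]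
  ring

lemma inner_sub_sub_cyclic_sum {V : Type*} [NormedAddCommGroup V] [InnerProductSpace ℝ V]
    (a b c : V) :
    ⟪b - a, c - a⟫ + ⟪c - b, a - b⟫ + ⟪a - c, b - c⟫ =
      ‖b - a‖ ^ 2 - ⟪b - a, c - a⟫ + ‖c - a‖ ^ 2 := by
  obtain ⟨u, rfl⟩ : ∃ u, b = a + u := ⟨b - a, by abel⟩
  obtain ⟨v, rfl⟩ : ∃ v, c = a + v := ⟨c - a, by abel⟩
  simp only [add_sub_cancel_left, add_sub_add_left_eq_sub, sub_add_cancel_left, inner_sub_left,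
    inner_sub_right, inner_neg_left, inner_neg_right, real_inner_self_eq_norm_sq,
    real_inner_comm u v]
  ring

theorem setIntegral_image_add_linearMap {E F : Type*} [NormedAddCommGroup E] [NormedSpace ℝ E]
    [FiniteDimensional ℝ E] [MeasurableSpace E] [BorelSpace E] [NormedAddCommGroup F]
    [NormedSpace ℝ F] (μ : Measure E) [μ.IsAddHaarMeasure] (a : E) {L : E →L[ℝ] E}
    (hL : Function.Injective L) {s : Set E} (hs : MeasurableSet s) (g : E → F) :
    ∫ x in (fun p => a + L p) '' s, g x ∂μ =
      |LinearMap.det (L : E →ₗ[ℝ] E)| • ∫ p in s, g (a + L p) ∂μ := by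
  rw [integral_image_eq_integral_abs_det_fderiv_smul μ hs
    (fun p _ => (L.hasFDerivAt.const_add a).hasFDerivWithinAt)
    ((add_right_injective a).comp hL).injOn, integral_smul]

def stdTriangle : Set (ℝ × ℝ) := {q | 0 ≤ q.1 ∧ 0 ≤ q.2 ∧ q.1 + q.2 ≤ 1}

lemma isClosed_stdTriangle : IsClosed stdTriangle :=
  (isClosed_le continuous_const continuous_fst).inter
    ((isClosed_le continuous_const continuous_snd).inter
      (isClosed_le (continuous_fst.add continuous_snd) continuous_const))

lemma isCompact_stdTriangle : IsCompact stdTriangle :=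
  isCompact_Icc.of_isClosed_subset isClosed_stdTriangle fun q ⟨h1, h2, h3⟩ =>
    (⟨⟨h1, h2⟩, ⟨by linarith, by linarith⟩⟩ : q ∈ Icc (0, 0) (1, 1))

lemma setIntegral_stdTriangle {f : ℝ × ℝ → ℝ} (hf : Continuous f) :
    ∫ q in stdTriangle, f q = ∫ x in (0 : ℝ)..1, ∫ y in (0 : ℝ)..(1 - x), f (x, y) := by
  have hT := isClosed_stdTriangle.measurableSet
  have hslice (x : ℝ) : ∫ y, stdTriangle.indicator f (x, y) =
      (Icc 0 1).indicator (fun x => ∫ y in (0 : ℝ)..(1 - x), f (x, y)) x := by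
    by_cases hx : x ∈ Icc (0 : ℝ) 1
    · have : (fun y => stdTriangle.indicator f (x, y)) =
          (Icc 0 (1 - x)).indicator fun y => f (x, y) := by
        ext y
        simp only [indicator_apply, stdTriangle, mem_ofPred_eq, mem_Icc, hx.1, true_and,
          le_sub_iff_add_le']
      rw [this, integral_indicator measurableSet_Icc, indicator_of_mem hx,
        intervalIntegral.integral_of_le (by linarith [hx.2]), integral_Icc_eq_integral_Ioc]
    · have : (fun y => stdTriangle.indicator f (x, y)) = 0 := by
        ext y
        exact indicator_of_notMem (fun h => hx ⟨h.1, by linarith [h.2.1, h.2.2]⟩) _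
      simp only [this, integral_zero', indicator_of_notMem hx]
  have hint : Integrable (stdTriangle.indicator f) :=
    (integrable_indicator_iff hT).2 (hf.continuousOn.integrableOn_compact isCompact_stdTriangle)
  rw [← integral_indicator hT, Measure.volume_eq_prod, integral_prod _ hint]
  simp_rw [hslice]
  rw [integral_indicator measurableSet_Icc, intervalIntegral.integral_of_le zero_le_one,
    integral_Icc_eq_integral_Ioc]

lemma volume_real_stdTriangle : volume.real stdTriangle = 1 / 2 := by
  have h := setIntegral_stdTriangle (f := fun _ => (1 : ℝ)) continuous_const
  simp only [setIntegral_const, smul_eq_mul, mul_one, intervalIntegral.integral_const] at h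
  rw [h, intervalIntegral.integral_congr (g := fun x => 0 * x ^ 3 + 0 * x ^ 2 + (-1) * x + 1)
    fun x _ => by ring, integral_cubic]
  norm_num

lemma setIntegral_stdTriangle_quadratic (α β γ : ℝ) :
    ∫ q in stdTriangle, (α * (q.1 - 1 / 3) ^ 2 + 2 * β * ((q.1 - 1 / 3) * (q.2 - 1 / 3)) +
      γ * (q.2 - 1 / 3) ^ 2) = (α - β + γ) / 36 := by
  rw [setIntegral_stdTriangle (by fun_prop)]
  -- the inner integral is `K₃ s³ + K₂ s² + K₁ s + K₀` with `s = x - 1/3`, expanded in powers of `x`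
  set K₃ := β - α - γ / 3
  set K₂ := (2 * α - 2 * β + γ) / 3
  set K₁ := -γ / 9
  set K₀ := 2 * γ / 81
  have hinner (x : ℝ) : ∫ y in (0 : ℝ)..(1 - x), (α * (x - 1 / 3) ^ 2 +
      2 * β * ((x - 1 / 3) * (y - 1 / 3)) + γ * (y - 1 / 3) ^ 2) =
      K₃ * x ^ 3 + (K₂ - K₃) * x ^ 2 + (K₃ / 3 - 2 * K₂ / 3 + K₁) * x +
        (-K₃ / 27 + K₂ / 9 - K₁ / 3 + K₀) := by
    rw [intervalIntegral.integral_congr (g := fun y => 0 * y ^ 3 + γ * y ^ 2 +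
      (2 * β * (x - 1 / 3) - 2 * γ / 3) * y +
      (α * (x - 1 / 3) ^ 2 - 2 * β * (x - 1 / 3) / 3 + γ / 9)) fun y _ => by ring, integral_cubic]
    ring
  simp_rw [hinner]
  rw [integral_cubic]
  ring

noncomputable def euclideanEquivProd : ℝ² ≃ᵐ ℝ × ℝ :=
  (MeasurableEquiv.toLp 2 (Fin 2 → ℝ)).symm.trans MeasurableEquiv.finTwoArrow

@[simp]
lemma euclideanEquivProd_apply (p : ℝ²) : euclideanEquivProd p = (p 0, p 1) := rfl

lemma volume_preserving_euclideanEquivProd : MeasurePreserving euclideanEquivProd :=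
  (EuclideanSpace.volume_preserving_symm_measurableEquiv_toLp (Fin 2)).trans
    (volume_preserving_finTwoArrow ℝ)

lemma convex_preimage_stdTriangle : Convex ℝ (euclideanEquivProd ⁻¹' stdTriangle) := by
  intro p hp q hq a b ha hb hab
  simp only [stdTriangle, mem_preimage, euclideanEquivProd_apply, mem_ofPred_eq, PiLp.add_apply,
    PiLp.smul_apply, smul_eq_mul] at hp hq ⊢
  obtain ⟨hp0, hp1, hp2⟩ := hp
  obtain ⟨hq0, hq1, hq2⟩ := hq
  exact ⟨by positivity, by positivity, by nlinarith⟩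

def cross (u v : ℝ²) : ℝ := u 0 * v 1 - u 1 * v 0

noncomputable def pairMap (u v : ℝ²) : ℝ² →L[ℝ] ℝ² :=
  (EuclideanSpace.proj 0).smulRight u + (EuclideanSpace.proj 1).smulRight v

@[simp]
lemma pairMap_apply (u v p : ℝ²) : pairMap u v p = p 0 • u + p 1 • v := rfl

lemma det_pairMap (u v : ℝ²) : LinearMap.det (pairMap u v : ℝ² →ₗ[ℝ] ℝ²) = cross u v := by
  rw [← LinearMap.det_toMatrix (EuclideanSpace.basisFun (Fin 2) ℝ).toBasis, Matrix.det_fin_two]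
  simp [LinearMap.toMatrix_apply, cross, mul_comm]

lemma convexHull_range_eq_image (W : Fin 3 → ℝ²) :
    convexHull ℝ (range W) =
      (fun p => W 0 + pairMap (W 1 - W 0) (W 2 - W 0) p) ''
        (euclideanEquivProd ⁻¹' stdTriangle) := by
  refine (convexHull_min ?_ ?_).antisymm ?_
  · rintro _ ⟨i, rfl⟩
    fin_cases i
    · exact ⟨0, by simp [stdTriangle], by simp⟩
    · exact ⟨EuclideanSpace.single 0 1, by simp [stdTriangle], by simp⟩
    · exact ⟨EuclideanSpace.single 1 1, by simp [stdTriangle], by simp⟩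
  · simpa only [image_image, ContinuousLinearMap.coe_coe] using
      (convex_preimage_stdTriangle.linear_image (pairMap _ _).toLinearMap).translate (W 0)
  · rintro _ ⟨p, hp, rfl⟩
    obtain ⟨h0, h1, h2⟩ : 0 ≤ p 0 ∧ 0 ≤ p 1 ∧ p 0 + p 1 ≤ 1 := hp
    refine mem_convexHull_of_exists_fintype ![1 - p 0 - p 1, p 0, p 1] W ?_ ?_ mem_range_self ?_
    · intro i
      fin_cases i
      exacts [(by linarith : (0 : ℝ) ≤ 1 - p 0 - p 1), h0, h1]
    · simp only [Fin.sum_univ_three, Matrix.cons_val]; ring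
    · simp only [Fin.sum_univ_three, Matrix.cons_val, pairMap_apply]; module

theorem setIntegral_convexHull_triangle {F : Type*} [NormedAddCommGroup F] [NormedSpace ℝ F]
    {W : Fin 3 → ℝ²} (hW : cross (W 1 - W 0) (W 2 - W 0) ≠ 0) (g : ℝ² → F) :
    ∫ x in convexHull ℝ (range W), g x = |cross (W 1 - W 0) (W 2 - W 0)| •
      ∫ q in stdTriangle, g (W 0 + (q.1 • (W 1 - W 0) + q.2 • (W 2 - W 0))) := by
  rw [← det_pairMap] at hW ⊢
  rw [convexHull_range_eq_image, setIntegral_image_add_linearMap volume _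
    (LinearMap.equivOfDetNeZero _ hW).injective
    (euclideanEquivProd.measurable isClosed_stdTriangle.measurableSet)]
  congr 1
  exact volume_preserving_euclideanEquivProd.setIntegral_preimage_emb
    euclideanEquivProd.measurableEmbedding (fun q => g (W 0 + (q.1 • _ + q.2 • _))) stdTriangle

lemma volume_real_convexHull_triangle {W : Fin 3 → ℝ²} (hW : cross (W 1 - W 0) (W 2 - W 0) ≠ 0) :
    volume.real (convexHull ℝ (range W)) = |cross (W 1 - W 0) (W 2 - W 0)| / 2 := by
  have h := setIntegral_convexHull_triangle hW fun _ => (1 : ℝ)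
  simp only [setIntegral_const, smul_eq_mul, mul_one, volume_real_stdTriangle] at h
  rw [h]; ring

theorem integral_norm_sub_centroid_sq {W : Fin 3 → ℝ²}
    (hW : cross (W 1 - W 0) (W 2 - W 0) ≠ 0) :
    ∫ x in convexHull ℝ (range W), ‖x - (3 : ℝ)⁻¹ • (W 0 + W 1 + W 2)‖ ^ 2 =
      |cross (W 1 - W 0) (W 2 - W 0)| *
        ((‖W 1 - W 0‖ ^ 2 - ⟪W 1 - W 0, W 2 - W 0⟫ + ‖W 2 - W 0‖ ^ 2) / 36) := by
  have hcentred (q : ℝ × ℝ) : W 0 + (q.1 • (W 1 - W 0) + q.2 • (W 2 - W 0)) -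
      (3 : ℝ)⁻¹ • (W 0 + W 1 + W 2) =
        (q.1 - 1 / 3) • (W 1 - W 0) + (q.2 - 1 / 3) • (W 2 - W 0) := by
    module
  rw [setIntegral_convexHull_triangle hW, smul_eq_mul]
  simp_rw [hcentred, norm_smul_add_smul_sq]
  rw [setIntegral_stdTriangle_quadratic]

lemma cross_sq_add_inner_sq (u v : ℝ²) : cross u v ^ 2 + ⟪u, v⟫ ^ 2 = ‖u‖ ^ 2 * ‖v‖ ^ 2 := by
  simp only [cross, EuclideanSpace.norm_sq_eq, PiLp.inner_apply, RCLike.inner_apply, conj_trivial,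
    Fin.sum_univ_two, Real.norm_eq_abs, sq_abs]
  ring

lemma abs_cross_eq (u v : ℝ²) : |cross u v| = ‖u‖ * ‖v‖ * sin (angle u v) := by
  rw [mul_comm, sin_angle_mul_norm_mul_norm, real_inner_self_eq_norm_sq, real_inner_self_eq_norm_sq,
    ← sq, ← cross_sq_add_inner_sq, add_sub_cancel_right, sqrt_sq_eq_abs]

lemma abs_cross_pos {W : Fin 3 → ℝ²} (hW : AffineIndependent ℝ W) :
    0 < |cross (W 1 - W 0) (W 2 - W 0)| := by
  have h : ¬ Collinear ℝ {W 1, W 0, W 2} := by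
    have hrange : ({W 1, W 0, W 2} : Set ℝ²) = range W := by
      ext x
      simp only [mem_insert_iff, mem_singleton_iff, mem_range, Fin.exists_fin_succ,
        IsEmpty.exists_iff, or_false, eq_comm (b := x), Fin.succ_zero_eq_one, Fin.succ_one_eq_two]
      exact or_left_comm
    rwa [hrange, ← affineIndependent_iff_not_collinear]
  have h1 : W 1 - W 0 ≠ 0 := sub_ne_zero.2 (ne₁₂_of_not_collinear h)
  have h2 : W 2 - W 0 ≠ 0 := sub_ne_zero.2 (ne₂₃_of_not_collinear h).symm
  have hsin : 0 < sin (∠ (W 1) (W 0) (W 2)) := EuclideanGeometry.sin_pos_of_not_collinear h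
  rw [abs_cross_eq]
  exact mul_pos (mul_pos (norm_pos_iff.2 h1) (norm_pos_iff.2 h2)) hsin

lemma three_mul_abs_cross_le (u v : ℝ²) :
    3 * |cross u v| ≤ 2 * (‖u‖ ^ 2 - ⟪u, v⟫ + ‖v‖ ^ 2) := by
  have h := cross_sq_add_inner_sq u v
  rw [← sq_abs] at h
  have hsq : (3 * |cross u v| + 2 * ⟪u, v⟫) ^ 2 ≤ (4 * (‖u‖ * ‖v‖)) ^ 2 := by
    nlinarith [sq_nonneg (7 * |cross u v| - 6 * ⟪u, v⟫), sq_nonneg ⟪u, v⟫]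
  have := le_of_sq_le_sq hsq (by positivity)
  nlinarith [sq_nonneg (‖u‖ - ‖v‖)]

lemma inner_mul_sin_le_cos_mul_abs_cross {θ : ℝ} (hθ : 0 ≤ θ) {u v : ℝ²} (h : θ ≤ angle u v) :
    ⟪u, v⟫ * sin θ ≤ cos θ * |cross u v| := by
  have hsin : 0 ≤ sin (angle u v - θ) :=
    sin_nonneg_of_nonneg_of_le_pi (by linarith) (by linarith [angle_le_pi u v])
  rw [sin_sub] at hsin
  rw [← cos_angle_mul_norm_mul_norm, abs_cross_eq]
  nlinarith [mul_nonneg hsin (mul_nonneg (norm_nonneg u) (norm_nonneg v))]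

lemma cross_sub_sub_rotate (a b c : ℝ²) : cross (c - b) (a - b) = cross (b - a) (c - a) := by
  simp only [cross, PiLp.sub_apply]
  ring

lemma mul_sin_le_of_le_angle {W : Fin 3 → ℝ²} {θ : ℝ} (hθ : 0 ≤ θ)
    (hangle : ∀ i : Fin 3, θ ≤ ∠ (W (i + 1)) (W i) (W (i + 2))) :
    (‖W 1 - W 0‖ ^ 2 - ⟪W 1 - W 0, W 2 - W 0⟫ + ‖W 2 - W 0‖ ^ 2) * sin θ ≤
      3 * (cos θ * |cross (W 1 - W 0) (W 2 - W 0)|) := by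
  have h₀ : ⟪W 1 - W 0, W 2 - W 0⟫ * sin θ ≤ cos θ * |cross (W 1 - W 0) (W 2 - W 0)| :=
    inner_mul_sin_le_cos_mul_abs_cross hθ (hangle 0)
  have h₁ : ⟪W 2 - W 1, W 0 - W 1⟫ * sin θ ≤ cos θ * |cross (W 2 - W 1) (W 0 - W 1)| :=
    inner_mul_sin_le_cos_mul_abs_cross hθ (hangle 1)
  have h₂ : ⟪W 0 - W 2, W 1 - W 2⟫ * sin θ ≤ cos θ * |cross (W 0 - W 2) (W 1 - W 2)| :=
    inner_mul_sin_le_cos_mul_abs_cross hθ (hangle 2)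
  rw [cross_sub_sub_rotate] at h₁
  rw [cross_sub_sub_rotate, cross_sub_sub_rotate] at h₂
  rw [← inner_sub_sub_cyclic_sum]
  linarith

/-- For a nondegenerate triangle `K` in `ℝ²` with barycentre `G` and gyration
radius `ρ_K` (`ρ_K² = (1/|K|) ∫_K ‖x−G‖²`), one has `ρ_K²/|K| ≥ 1/6`; and if all the
interior angles of `K` are at least `θ⋆ ∈ (0, π/2)` then `ρ_K²/|K| ≤ 1/(3 tan θ⋆)`. -/
theorem stmt_1
    (W : Fin 3 → EuclideanSpace ℝ (Fin 2)) (hW : AffineIndependent ℝ W)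
    (K : Set (EuclideanSpace ℝ (Fin 2))) (hK : K = convexHull ℝ (Set.range W))
    (A : ℝ) (hA : A = (volume K).toReal)
    (G : EuclideanSpace ℝ (Fin 2)) (hG : G = (3 : ℝ)⁻¹ • (W 0 + W 1 + W 2))
    (ρsq : ℝ) (hρ : ρsq = (1 / A) * ∫ x in K, ‖x - G‖ ^ 2) :
    1 / 6 ≤ ρsq / A ∧
      ∀ θs : ℝ, θs ∈ Set.Ioo 0 (π / 2) →
        (∀ i : Fin 3, θs ≤ EuclideanGeometry.angle (W (i + 1)) (W i) (W (i + 2))) →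
        ρsq / A ≤ 1 / (3 * tan θs) := by
  subst hK hG
  set u := W 1 - W 0
  set v := W 2 - W 0
  have hD : 0 < |cross u v| := abs_cross_pos hW
  have hA' : A = |cross u v| / 2 := hA.trans (volume_real_convexHull_triangle (abs_pos.1 hD))
  have hratio : ρsq / A = (‖u‖ ^ 2 - ⟪u, v⟫ + ‖v‖ ^ 2) / (9 * |cross u v|) := by
    rw [hρ, integral_norm_sub_centroid_sq (abs_pos.1 hD), hA']
    field_simp
    ring
  refine ⟨?_, fun θ ⟨hθ₀, hθ₁⟩ hangle => ?_⟩
  · rw [hratio, le_div_iff₀ (by positivity)]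
    linarith [three_mul_abs_cross_le u v]
  · have hsin : 0 < sin θ := sin_pos_of_pos_of_lt_pi hθ₀ (by linarith [pi_pos])
    have hcos : 0 < cos θ := cos_pos_of_mem_Ioo ⟨by linarith, hθ₁⟩
    rw [hratio, show 1 / (3 * tan θ) = cos θ / (3 * sin θ) by rw [tan_eq_sin_div_cos]; field_simp,
      div_le_div_iff₀ (by positivity) (by positivity)]
    linarith [mul_sin_le_of_le_angle hθ₀.le hangle]
end

section
/- Let K be a nondegenerate triangle in ℝ² with vertices W₁, W₂, W₃ and interior angles θ₁, θ₂, θ₃. Then for every i, (G_K)_{ii} = ∫_K |φ_i(x)|² dx = (1/6)·cot θ_i + (3/4)·ρ_K²/|K|, and for every pair i ≠ j, with k the remaining index, (G_K)_{ij} = ∫_K φ_i(x)·φ_j(x) dx = (1/6)·cot θ_k − (3/4)·ρ_K²/|K|. -/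
/-
Map the reference triangle `{y | 0 ≤ y₀, 0 ≤ y₁, y₀ + y₁ ≤ 1}` affinely onto `K`, sending the
origin to the vertex `P = Wᵢ` and the unit vectors to the edges `u = Wᵢ₊₁ - Wᵢ`, `v = Wᵢ₊₂ - Wᵢ`.
The Jacobian is `|u × v| = 2|K|`, and every integrand is a quadratic polynomial, so all the
integrals reduce to the moments `1/2, 1/6, 1/12, 1/24` of the reference triangle. This gives
`ρ_K² = (‖u‖² + ‖v‖² - ⟪u, v⟫) / 18`, while Lagrange's identity gives `cot θᵢ = ⟪u, v⟫ / |u × v|`;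
the diagonal entry at `i` and the entry pairing the two other indices are then rational
identities in `‖u‖², ‖v‖², ⟪u, v⟫, |u × v|`, and cyclic relabelling of the vertices covers all
entries.
-/

open MeasureTheory Real RealInnerProductSpace

namespace PlaneTriangle

open Set

local notation "ℝ²" => EuclideanSpace ℝ (Fin 2)

lemma integral_cubic (a b k₀ k₁ k₂ k₃ : ℝ) :
    ∫ x in a..b, (k₀ + k₁ * x + k₂ * x ^ 2 + k₃ * x ^ 3) =
      k₀ * (b - a) + k₁ * (b ^ 2 - a ^ 2) / 2 + k₂ * (b ^ 3 - a ^ 3) / 3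
        + k₃ * (b ^ 4 - a ^ 4) / 4 := by
  have hderiv (x : ℝ) :
      HasDerivAt (fun x => k₀ * x + k₁ / 2 * x ^ 2 + k₂ / 3 * x ^ 3 + k₃ / 4 * x ^ 4)
        (k₀ + k₁ * x + k₂ * x ^ 2 + k₃ * x ^ 3) x := by
    refine (((((hasDerivAt_id' x).const_mul k₀).add
      ((hasDerivAt_pow 2 x).const_mul (k₁ / 2))).add ((hasDerivAt_pow 3 x).const_mul (k₂ / 3))).add
        ((hasDerivAt_pow 4 x).const_mul (k₃ / 4))).congr_deriv ?_
    push_cast; ring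
  rw [intervalIntegral.integral_eq_sub_of_hasDerivAt (fun x _ => hderiv x)
    ((Continuous.intervalIntegrable (by fun_prop) _ _))]
  ring

def unitTriangle : Set (ℝ × ℝ) := {p | 0 ≤ p.1 ∧ 0 ≤ p.2 ∧ p.1 + p.2 ≤ 1}

lemma isClosed_unitTriangle : IsClosed unitTriangle :=
  (isClosed_le continuous_const continuous_fst).inter <|
    (isClosed_le continuous_const continuous_snd).inter <|
      isClosed_le (continuous_fst.add continuous_snd) continuous_const

lemma isCompact_unitTriangle : IsCompact unitTriangle :=
  (isCompact_Icc (a := ((0 : ℝ), (0 : ℝ))) (b := (1, 1))).of_isClosed_subset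
    isClosed_unitTriangle fun _ ⟨h₁, h₂, h₃⟩ =>
      ⟨⟨h₁, h₂⟩, ⟨by linarith, by linarith⟩⟩

lemma unitTriangle_indicator (f : ℝ × ℝ → ℝ) (s t : ℝ) :
    unitTriangle.indicator f (s, t) =
      (Icc 0 1).indicator (fun s => (Icc 0 (1 - s)).indicator (fun t => f (s, t)) t) s := by
  simp only [indicator_apply, unitTriangle, mem_ofPred_eq, mem_Icc]
  split_ifs <;> first | rfl | (exfalso; grind)

lemma setIntegral_unitTriangle {f : ℝ × ℝ → ℝ} (hf : Continuous f) :
    ∫ p in unitTriangle, f p = ∫ s in (0 : ℝ)..1, ∫ t in (0 : ℝ)..(1 - s), f (s, t) := by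
  have hm := isClosed_unitTriangle.measurableSet
  have hint : Integrable (unitTriangle.indicator f) (volume.prod volume) :=
    (integrable_indicator_iff hm).2 (hf.continuousOn.integrableOn_compact isCompact_unitTriangle)
  have hslice (s : ℝ) : ∫ t, unitTriangle.indicator f (s, t) =
      (Icc 0 1).indicator (fun s => ∫ t in (0 : ℝ)..(1 - s), f (s, t)) s := by
    by_cases hs : s ∈ Icc (0 : ℝ) 1
    · simp_rw [unitTriangle_indicator, indicator_of_mem hs]
      rw [integral_indicator measurableSet_Icc, integral_Icc_eq_integral_Ioc,
        ← intervalIntegral.integral_of_le (by linarith [hs.2])]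
    · simp_rw [unitTriangle_indicator, indicator_of_notMem hs, integral_zero]
  rw [← integral_indicator hm, Measure.volume_eq_prod, integral_prod _ hint]
  simp_rw [hslice]
  rw [integral_indicator measurableSet_Icc, integral_Icc_eq_integral_Ioc,
    ← intervalIntegral.integral_of_le zero_le_one]

lemma setIntegral_unitTriangle_quadratic (c₀ c₁ c₂ c₃ c₄ c₅ : ℝ) :
    ∫ p in unitTriangle,
        (c₀ + c₁ * p.1 + c₂ * p.2 + c₃ * p.1 ^ 2 + c₄ * (p.1 * p.2) + c₅ * p.2 ^ 2) =
      c₀ / 2 + c₁ / 6 + c₂ / 6 + c₃ / 12 + c₄ / 24 + c₅ / 12 := by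
  rw [setIntegral_unitTriangle (by fun_prop)]
  have hinner (s : ℝ) :
      ∫ t in (0 : ℝ)..(1 - s),
          (c₀ + c₁ * s + c₂ * t + c₃ * s ^ 2 + c₄ * (s * t) + c₅ * t ^ 2)
        = (c₀ + c₁ * s + c₃ * s ^ 2) * (1 - s) + (c₂ + c₄ * s) * (1 - s) ^ 2 / 2
          + c₅ * (1 - s) ^ 3 / 3 := by
    convert integral_cubic 0 (1 - s) (c₀ + c₁ * s + c₃ * s ^ 2) (c₂ + c₄ * s) c₅ 0
      using 1
    · congr 1; ext t; ring
    · ring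
  simp_rw [hinner]
  convert integral_cubic 0 1 (c₀ + c₂ / 2 + c₅ / 3) (c₁ - c₀ + c₄ / 2 - c₂ - c₅)
    (c₃ - c₁ + c₂ / 2 - c₄ + c₅) (-c₃ + c₄ / 2 - c₅ / 3) using 1
  · congr 1; ext s; ring
  · ring

def stdTriangle : Set ℝ² := {y | 0 ≤ y 0 ∧ 0 ≤ y 1 ∧ y 0 + y 1 ≤ 1}

def coordEquiv : ℝ² ≃ᵐ ℝ × ℝ :=
  (MeasurableEquiv.toLp 2 (Fin 2 → ℝ)).symm.trans MeasurableEquiv.finTwoArrow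

lemma measurePreserving_coordEquiv : MeasurePreserving coordEquiv :=
  (volume_preserving_finTwoArrow ℝ).comp
    (EuclideanSpace.volume_preserving_symm_measurableEquiv_toLp (Fin 2))

lemma stdTriangle_eq_preimage : stdTriangle = coordEquiv ⁻¹' unitTriangle := rfl

lemma measurableSet_stdTriangle : MeasurableSet stdTriangle :=
  coordEquiv.measurable isClosed_unitTriangle.measurableSet

lemma setIntegral_stdTriangle_quadratic (c₀ c₁ c₂ c₃ c₄ c₅ : ℝ) :
    ∫ y in stdTriangle,
        (c₀ + c₁ * y 0 + c₂ * y 1 + c₃ * y 0 ^ 2 + c₄ * (y 0 * y 1) + c₅ * y 1 ^ 2) =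
      c₀ / 2 + c₁ / 6 + c₂ / 6 + c₃ / 12 + c₄ / 24 + c₅ / 12 := by
  rw [stdTriangle_eq_preimage, ← setIntegral_unitTriangle_quadratic]
  exact measurePreserving_coordEquiv.setIntegral_preimage_emb
    coordEquiv.measurableEmbedding
    (fun p => c₀ + c₁ * p.1 + c₂ * p.2 + c₃ * p.1 ^ 2 + c₄ * (p.1 * p.2) + c₅ * p.2 ^ 2) _

lemma stdTriangle_eq_convexHull :
    stdTriangle = convexHull ℝ {0, EuclideanSpace.single 0 1, EuclideanSpace.single 1 1} := by
  apply Subset.antisymm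
  · rintro y ⟨hy₀, hy₁, hy⟩
    have hcombo : ∑ i, ![1 - y 0 - y 1, y 0, y 1] i •
        ![0, EuclideanSpace.single 0 1, EuclideanSpace.single 1 1] i = y := by
      ext j; fin_cases j <;> simp [Fin.sum_univ_three]
    have hy' : 0 ≤ 1 - y 0 - y 1 := by linarith
    rw [← hcombo]
    refine (convex_convexHull ℝ _).sum_mem (fun i _ => ?_) ?_
      (fun i _ => subset_convexHull ℝ _ ?_)
    · fin_cases i <;> simp [hy₀, hy₁, hy']
    · simp [Fin.sum_univ_three, sub_add_eq_add_sub]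
    · fin_cases i <;> simp
  · refine convexHull_min ?_ ?_
    · simp [insert_subset_iff, stdTriangle]
    · rintro x ⟨hx₀, hx₁, hx⟩ y ⟨hy₀, hy₁, hy⟩ a b ha hb hab
      simp only [stdTriangle, mem_ofPred_eq, PiLp.add_apply, PiLp.smul_apply, smul_eq_mul]
      refine ⟨by positivity, by positivity, by nlinarith⟩

def cross (u v : ℝ²) : ℝ := u 0 * v 1 - u 1 * v 0

noncomputable def linearParam (u v : ℝ²) : ℝ² →L[ℝ] ℝ² :=
  (EuclideanSpace.proj 0 : ℝ² →L[ℝ] ℝ).smulRight u +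
    (EuclideanSpace.proj 1 : ℝ² →L[ℝ] ℝ).smulRight v

@[simp]
lemma linearParam_apply (u v y : ℝ²) : linearParam u v y = y 0 • u + y 1 • v := rfl

lemma det_linearParam (u v : ℝ²) : (linearParam u v).det = cross u v := by
  rw [ContinuousLinearMap.det,
    ← LinearMap.det_toMatrix (EuclideanSpace.basisFun (Fin 2) ℝ).toBasis, Matrix.det_fin_two]
  simp [LinearMap.toMatrix_apply, cross, mul_comm]

lemma convexHull_triangle_eq_image (P u v : ℝ²) :
    convexHull ℝ {P, P + u, P + v} = (fun y => P + linearParam u v y) '' stdTriangle := by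
  let f : ℝ² →ᵃ[ℝ] ℝ² :=
    AffineMap.const ℝ ℝ² P + (linearParam u v).toLinearMap.toAffineMap
  have hf : ⇑f = fun y => P + linearParam u v y := rfl
  rw [stdTriangle_eq_convexHull, ← hf, f.image_convexHull]
  simp [hf, image_insert_eq]

lemma injective_linearParam {u v : ℝ²} (hc : cross u v ≠ 0) :
    Function.Injective (linearParam u v) := by
  have hunit : IsUnit (linearParam u v : ℝ² →ₗ[ℝ] ℝ²) := by
    rw [LinearMap.isUnit_iff_isUnit_det, isUnit_iff_ne_zero]
    exact (det_linearParam u v).trans_ne hc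
  exact ((Module.End.isUnit_iff _).1 hunit).injective

lemma setIntegral_convexHull_triangle {F : Type*} [NormedAddCommGroup F] [NormedSpace ℝ F]
    {P u v : ℝ²} (hc : cross u v ≠ 0) (g : ℝ² → F) :
    ∫ x in convexHull ℝ {P, P + u, P + v}, g x =
      |cross u v| • ∫ y in stdTriangle, g (P + (y 0 • u + y 1 • v)) := by
  rw [convexHull_triangle_eq_image, integral_image_eq_integral_abs_det_fderiv_smul volume
    measurableSet_stdTriangle
    (fun y _ => ((linearParam u v).hasFDerivAt.const_add P).hasFDerivWithinAt)
    ((add_right_injective P).comp (injective_linearParam hc)).injOn, det_linearParam, integral_smul]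
  rfl

lemma volume_convexHull_triangle {P u v : ℝ²} (hc : cross u v ≠ 0) :
    (volume (convexHull ℝ {P, P + u, P + v})).toReal = |cross u v| / 2 := by
  have h := setIntegral_convexHull_triangle (P := P) hc fun _ => (1 : ℝ)
  have hone := setIntegral_stdTriangle_quadratic 1 0 0 0 0 0
  simp only [zero_mul, add_zero, setIntegral_const, smul_eq_mul, mul_one] at h hone
  rw [← measureReal_def, h, hone]
  ring

lemma setIntegral_inner_convexHull_triangle {P u v : ℝ²} (hc : cross u v ≠ 0) (a b : ℝ²) :
    ∫ x in convexHull ℝ {P, P + u, P + v}, ⟪x - P - a, x - P - b⟫ =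
      |cross u v| *
        (⟪a, b⟫ / 2 - ⟪a + b, u + v⟫ / 6 + (‖u‖ ^ 2 + ⟪u, v⟫ + ‖v‖ ^ 2) / 12) := by
  have hexpand (y : ℝ²) :
      ⟪P + (y 0 • u + y 1 • v) - P - a, P + (y 0 • u + y 1 • v) - P - b⟫ =
        ⟪a, b⟫ + (-⟪a + b, u⟫) * y 0 + (-⟪a + b, v⟫) * y 1 + ‖u‖ ^ 2 * y 0 ^ 2
          + (2 * ⟪u, v⟫) * (y 0 * y 1) + ‖v‖ ^ 2 * y 1 ^ 2 := by
    rw [add_sub_cancel_left]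
    simp only [inner_sub_left, inner_sub_right, inner_add_left, inner_add_right,
      real_inner_smul_left, real_inner_smul_right, real_inner_self_eq_norm_sq, norm_smul, mul_pow,
      norm_eq_abs, sq_abs, real_inner_comm b u, real_inner_comm b v, real_inner_comm u v]
    ring
  rw [setIntegral_convexHull_triangle hc, smul_eq_mul,
    setIntegral_congr_fun measurableSet_stdTriangle fun y _ => hexpand y,
    setIntegral_stdTriangle_quadratic, inner_add_right]
  ring

lemma abs_cross_eq (u v : ℝ²) :
    |cross u v| = sin (InnerProductGeometry.angle u v) * (‖u‖ * ‖v‖) := by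
  have hlagrange : ⟪u, u⟫ * ⟪v, v⟫ - ⟪u, v⟫ * ⟪u, v⟫ = cross u v ^ 2 := by
    simp only [EuclideanSpace.inner_eq_star_dotProduct, dotProduct, Fin.sum_univ_two, cross,
      Pi.star_apply, star_trivial]
    ring
  rw [InnerProductGeometry.sin_angle_mul_norm_mul_norm, hlagrange, sqrt_sq_eq_abs]

lemma cross_ne_zero_of_affineIndependent {W : Fin 3 → ℝ²} (hW : AffineIndependent ℝ W)
    (i : Fin 3) : cross (W (i + 1) - W i) (W (i + 2) - W i) ≠ 0 := by
  have hsin : 0 < sin (EuclideanGeometry.angle (W (i + 1)) (W i) (W (i + 2))) :=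
    EuclideanGeometry.sin_pos_of_not_collinear
      ((affineIndependent_iff_not_collinear_of_ne (by simp) (by simp) (by simp)).1 hW)
  have hne (j : Fin 3) (hj : j ≠ 0) : 0 < ‖W (i + j) - W i‖ :=
    norm_pos_iff.2 (sub_ne_zero.2 (hW.injective.ne (by simpa using hj)))
  rw [← abs_pos, abs_cross_eq]
  exact mul_pos hsin (mul_pos (hne 1 (by simp)) (hne 2 (by simp)))

lemma cot_angle_eq {u v : ℝ²} (hc : cross u v ≠ 0) :
    cos (InnerProductGeometry.angle u v) / sin (InnerProductGeometry.angle u v) =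
      ⟪u, v⟫ / |cross u v| := by
  have hu : u ≠ 0 := by rintro rfl; simp [cross] at hc
  have hv : v ≠ 0 := by rintro rfl; simp [cross] at hc
  rw [InnerProductGeometry.cos_angle, abs_cross_eq]
  field_simp

lemma setIntegral_norm_sub_centroid_sq {P u v : ℝ²} (hc : cross u v ≠ 0) :
    ∫ x in convexHull ℝ {P, P + u, P + v}, ‖x - (P + (3 : ℝ)⁻¹ • (u + v))‖ ^ 2 =
      |cross u v| * (‖u‖ ^ 2 + ‖v‖ ^ 2 - ⟪u, v⟫) / 36 := by
  simp_rw [← real_inner_self_eq_norm_sq, ← sub_sub]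
  rw [setIntegral_inner_convexHull_triangle hc]
  simp only [inner_add_left, inner_add_right, real_inner_smul_left, real_inner_smul_right]
  simp only [real_inner_self_eq_norm_sq, real_inner_comm u v]
  ring

lemma massMatrix_entries_of_vertex {P u v : ℝ²} (hc : cross u v ≠ 0) {A ρsq : ℝ}
    (hA : A = (volume (convexHull ℝ {P, P + u, P + v})).toReal)
    (hρ : ρsq = (1 / A) *
      ∫ x in convexHull ℝ {P, P + u, P + v}, ‖x - (P + (3 : ℝ)⁻¹ • (u + v))‖ ^ 2) :
    (∫ x in convexHull ℝ {P, P + u, P + v}, ‖(2 * A)⁻¹ • (x - P)‖ ^ 2) =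
        1 / 6 * (cos (InnerProductGeometry.angle u v) / sin (InnerProductGeometry.angle u v))
          + 3 / 4 * (ρsq / A) ∧
      (∫ x in convexHull ℝ {P, P + u, P + v},
          ⟪(2 * A)⁻¹ • (x - (P + u)), (2 * A)⁻¹ • (x - (P + v))⟫) =
        1 / 6 * (cos (InnerProductGeometry.angle u v) / sin (InnerProductGeometry.angle u v))
          - 3 / 4 * (ρsq / A) := by
  rw [volume_convexHull_triangle hc] at hA
  rw [setIntegral_norm_sub_centroid_sq hc, hA] at hρ
  have hcpos : 0 < |cross u v| := abs_pos.2 hc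
  have hscale (x y : ℝ²) :
      ⟪(2 * A)⁻¹ • x, (2 * A)⁻¹ • y⟫ = ((2 * A)⁻¹) ^ 2 * ⟪x, y⟫ := by
    rw [real_inner_smul_left, real_inner_smul_right]; ring
  have hdiag := setIntegral_inner_convexHull_triangle hc (P := P) 0 0
  have hoff := setIntegral_inner_convexHull_triangle hc (P := P) u v
  simp only [sub_zero, inner_zero_left, zero_add, zero_div] at hdiag
  simp only [sub_sub] at hoff
  simp_rw [← real_inner_self_eq_norm_sq, hscale, integral_const_mul, hdiag, hoff,
    cot_angle_eq hc, hρ, hA]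
  rw [← real_inner_self_eq_norm_sq u, ← real_inner_self_eq_norm_sq v]
  simp only [inner_add_left, inner_add_right, real_inner_comm u v]
  constructor <;> field_simp <;> ring

lemma range_fin_three_eq {α : Type*} (W : Fin 3 → α) (i : Fin 3) :
    range W = {W i, W (i + 1), W (i + 2)} := by
  rw [← (Equiv.addLeft i).surjective.range_comp, Fin.range_fin_succ, Fin.range_fin_succ,
    Fin.range_fin_succ]
  simp [Fin.tail]

lemma sum_fin_three_eq {M : Type*} [AddCommMonoid M] (W : Fin 3 → M) (i : Fin 3) :
    W 0 + W 1 + W 2 = W i + W (i + 1) + W (i + 2) := by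
  rw [← Fin.sum_univ_three, ← Equiv.sum_comp (Equiv.addLeft i) W, Fin.sum_univ_three]
  simp

end PlaneTriangle

/-- For a nondegenerate triangle `K` in `ℝ²` with interior angles
`θ₁, θ₂, θ₃` and Raviart–Thomas basis functions `φᵢ(x) = (x − Wᵢ)/(2|K|)`, the entries of
the local mass matrix satisfy `∫_K ‖φᵢ‖² = (1/6) cot θᵢ + (3/4) ρ_K²/|K|` and, for
`i ≠ j` with remaining index `k`, `∫_K φᵢ·φⱼ = (1/6) cot θ_k − (3/4) ρ_K²/|K|`. -/
theorem stmt_5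
    (W : Fin 3 → EuclideanSpace ℝ (Fin 2)) (hW : AffineIndependent ℝ W)
    (K : Set (EuclideanSpace ℝ (Fin 2))) (hK : K = convexHull ℝ (Set.range W))
    (A : ℝ) (hA : A = (volume K).toReal)
    (G : EuclideanSpace ℝ (Fin 2)) (hG : G = (3 : ℝ)⁻¹ • (W 0 + W 1 + W 2))
    (ρsq : ℝ) (hρ : ρsq = (1 / A) * ∫ x in K, ‖x - G‖ ^ 2)
    (θ : Fin 3 → ℝ)
    (hθ : ∀ i : Fin 3, θ i = EuclideanGeometry.angle (W (i + 1)) (W i) (W (i + 2)))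
    (φ : Fin 3 → EuclideanSpace ℝ (Fin 2) → EuclideanSpace ℝ (Fin 2))
    (hφ : ∀ i x, φ i x = (2 * A)⁻¹ • (x - W i)) :
    (∀ i : Fin 3,
        (∫ x in K, ‖φ i x‖ ^ 2) = (1 / 6) * (cos (θ i) / sin (θ i)) + (3 / 4) * (ρsq / A)) ∧
      (∀ i j k : Fin 3, i ≠ j → j ≠ k → i ≠ k →
        (∫ x in K, ⟪φ i x, φ j x⟫) =
          (1 / 6) * (cos (θ k) / sin (θ k)) - (3 / 4) * (ρsq / A)) := by
  have vertex (i : Fin 3) :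
      (∫ x in K, ‖φ i x‖ ^ 2) = 1 / 6 * (cos (θ i) / sin (θ i)) + 3 / 4 * (ρsq / A) ∧
        (∫ x in K, ⟪φ (i + 1) x, φ (i + 2) x⟫) =
          1 / 6 * (cos (θ i) / sin (θ i)) - 3 / 4 * (ρsq / A) := by
    have hKi : K = convexHull ℝ {W i, W (i + 1), W (i + 2)} := by
      rw [hK, PlaneTriangle.range_fin_three_eq W i]
    have hGi : G = W i + (3 : ℝ)⁻¹ • ((W (i + 1) - W i) + (W (i + 2) - W i)) := by
      rw [hG, PlaneTriangle.sum_fin_three_eq W i]; module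
    have hentries := PlaneTriangle.massMatrix_entries_of_vertex (P := W i) (A := A) (ρsq := ρsq)
      (PlaneTriangle.cross_ne_zero_of_affineIndependent hW i)
      (by rw [hA, hKi, add_sub_cancel, add_sub_cancel])
      (by rw [hρ, hKi, hGi, add_sub_cancel, add_sub_cancel])
    simp only [add_sub_cancel] at hentries
    simp only [hKi, hφ, hθ i]
    exact hentries
  refine ⟨fun i => (vertex i).1, fun i j k hij hjk hik => ?_⟩
  obtain ⟨rfl, rfl⟩ | ⟨rfl, rfl⟩ : i = k + 1 ∧ j = k + 2 ∨ i = k + 2 ∧ j = k + 1 := by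
    revert i j k; decide
  · exact (vertex k).2
  · simp_rw [real_inner_comm (φ (k + 1) _)]
    exact (vertex k).2
end

section
/- Let F, A, B, D be strictly positive real numbers. Define a = (√(4+F²) − F)/2, b = A/(D + √(B²+D²)), β = b·a²/(1 + 2ab) and α = a − β. Then: (i) a·F + a² = 1; (ii) α > 0 and β > 0; (iii) (α + β)·F + α² + β² ≤ 1; and (iv) β ≤ b·α². -/
/-- For strictly positive reals `F, A, B, D`, setting
`a = (√(4+F²) − F)/2`, `b = A/(D + √(B²+D²))`, `β = b·a²/(1 + 2ab)` and `α = a − β`,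
one has `aF + a² = 1`, `α > 0`, `β > 0`, `(α+β)F + α² + β² ≤ 1` and `β ≤ b·α²`. -/
theorem stmt_9 (F A B D : ℝ) (hF : 0 < F) (hA : 0 < A) (hB : 0 < B) (hD : 0 < D)
    (a b β α : ℝ)
    (ha : a = (Real.sqrt (4 + F ^ 2) - F) / 2)
    (hb : b = A / (D + Real.sqrt (B ^ 2 + D ^ 2)))
    (hβ : β = b * a ^ 2 / (1 + 2 * a * b))
    (hα : α = a - β) :
    a * F + a ^ 2 = 1 ∧ (0 < α ∧ 0 < β) ∧
      (α + β) * F + α ^ 2 + β ^ 2 ≤ 1 ∧ β ≤ b * α ^ 2 := by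
  have hs : Real.sqrt (4 + F ^ 2) ^ 2 = 4 + F ^ 2 := Real.sq_sqrt (by positivity)
  have hsn : 0 ≤ Real.sqrt (4 + F ^ 2) := Real.sqrt_nonneg _
  have haF : a * F + a ^ 2 = 1 := by rw [ha]; nlinarith [hs]
  have ha0 : 0 < a := by rw [ha]; nlinarith [hs, hsn]
  have hb0 : 0 < b := by
    rw [hb]
    have : 0 < D + Real.sqrt (B ^ 2 + D ^ 2) := by positivity
    positivity
  have hden : 0 < 1 + 2 * a * b := by positivity
  have hβ0 : 0 < β := by rw [hβ]; positivity
  have hβa : β < a := by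
    rw [hβ, div_lt_iff₀ hden]
    nlinarith [mul_pos ha0 hb0, mul_pos (mul_pos ha0 ha0) hb0]
  have hα0 : 0 < α := by rw [hα]; linarith
  refine ⟨haF, ⟨hα0, hβ0⟩, ?_, ?_⟩
  · have hsum : α + β = a := by rw [hα]; ring
    nlinarith [mul_pos hα0 hβ0]
  · have e2 : β * (1 + 2 * a * b) = b * a ^ 2 := by
      rw [hβ]; field_simp
    have e : α * (1 + 2 * a * b) = a * (1 + a * b) := by
      rw [hα]; nlinarith [e2]
    have hc2 : 0 < (1 + 2 * a * b) ^ 2 := by positivity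
    have key : β * (1 + 2 * a * b) ^ 2 ≤ b * α ^ 2 * (1 + 2 * a * b) ^ 2 := by
      have l1 : β * (1 + 2 * a * b) ^ 2 = b * a ^ 2 * (1 + 2 * a * b) := by
        calc β * (1 + 2 * a * b) ^ 2 = β * (1 + 2 * a * b) * (1 + 2 * a * b) := by ring
          _ = b * a ^ 2 * (1 + 2 * a * b) := by rw [e2]
      have l2 : b * α ^ 2 * (1 + 2 * a * b) ^ 2 = b * (a * (1 + a * b)) ^ 2 := by
        calc b * α ^ 2 * (1 + 2 * a * b) ^ 2 = b * (α * (1 + 2 * a * b)) ^ 2 := by ring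
          _ = b * (a * (1 + a * b)) ^ 2 := by rw [e]
      rw [l1, l2]
      nlinarith [mul_nonneg (mul_nonneg hb0.le (sq_nonneg a)) (sq_nonneg (a * b))]
    exact le_of_mul_le_mul_right key hc2
end

section
/- For all nonnegative real numbers x₁, x₂, x₃, one has 9·σ₁₂ − 15·Σ_{10,2,0} + 15·Σ_{8,4,0} − 33·Σ_{8,2,2} − 18·Σ_{6,6,0} + 48·Σ_{6,4,2} + 558·ϖ⁴ ≤ 23·σ₂⁶. -/
/-- For all nonnegative reals `x₁, x₂, x₃`,
`9σ₁₂ − 15Σ₍₁₀,₂,₀₎ + 15Σ₍₈,₄,₀₎ − 33Σ₍₈,₂,₂₎ − 18Σ₍₆,₆,₀₎ + 48Σ₍₆,₄,₂₎ + 558ϖ⁴ ≤ 23σ₂⁶`. -/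
theorem stmt_11 (x₁ x₂ x₃ : ℝ) (h₁ : 0 ≤ x₁) (h₂ : 0 ≤ x₂) (h₃ : 0 ≤ x₃) :
    9 * (x₁ ^ 12 + x₂ ^ 12 + x₃ ^ 12) -
      15 * (x₁ ^ 10 * x₂ ^ 2 + x₁ ^ 10 * x₃ ^ 2 + x₂ ^ 10 * x₁ ^ 2 + x₂ ^ 10 * x₃ ^ 2 +
        x₃ ^ 10 * x₁ ^ 2 + x₃ ^ 10 * x₂ ^ 2) +
      15 * (x₁ ^ 8 * x₂ ^ 4 + x₁ ^ 8 * x₃ ^ 4 + x₂ ^ 8 * x₁ ^ 4 + x₂ ^ 8 * x₃ ^ 4 +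
        x₃ ^ 8 * x₁ ^ 4 + x₃ ^ 8 * x₂ ^ 4) -
      33 * (x₁ ^ 8 * x₂ ^ 2 * x₃ ^ 2 + x₂ ^ 8 * x₁ ^ 2 * x₃ ^ 2 + x₃ ^ 8 * x₁ ^ 2 * x₂ ^ 2) -
      18 * (x₁ ^ 6 * x₂ ^ 6 + x₂ ^ 6 * x₃ ^ 6 + x₃ ^ 6 * x₁ ^ 6) +
      48 * (x₁ ^ 6 * x₂ ^ 4 * x₃ ^ 2 + x₁ ^ 6 * x₃ ^ 4 * x₂ ^ 2 + x₂ ^ 6 * x₁ ^ 4 * x₃ ^ 2 +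
        x₂ ^ 6 * x₃ ^ 4 * x₁ ^ 2 + x₃ ^ 6 * x₁ ^ 4 * x₂ ^ 2 + x₃ ^ 6 * x₂ ^ 4 * x₁ ^ 2) +
      558 * (x₁ * x₂ * x₃) ^ 4 ≤
    23 * (x₁ ^ 2 + x₂ ^ 2 + x₃ ^ 2) ^ 6 := by
  nlinarith [mul_nonneg (mul_nonneg (pow_nonneg h₁ 0) (pow_nonneg h₂ 0)) (pow_nonneg h₃ 12),
    mul_nonneg (mul_nonneg (pow_nonneg h₁ 0) (pow_nonneg h₂ 2)) (pow_nonneg h₃ 10),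
    mul_nonneg (mul_nonneg (pow_nonneg h₁ 0) (pow_nonneg h₂ 4)) (pow_nonneg h₃ 8),
    mul_nonneg (mul_nonneg (pow_nonneg h₁ 0) (pow_nonneg h₂ 6)) (pow_nonneg h₃ 6),
    mul_nonneg (mul_nonneg (pow_nonneg h₁ 0) (pow_nonneg h₂ 8)) (pow_nonneg h₃ 4),
    mul_nonneg (mul_nonneg (pow_nonneg h₁ 0) (pow_nonneg h₂ 10)) (pow_nonneg h₃ 2),
    mul_nonneg (mul_nonneg (pow_nonneg h₁ 0) (pow_nonneg h₂ 12)) (pow_nonneg h₃ 0),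
    mul_nonneg (mul_nonneg (pow_nonneg h₁ 2) (pow_nonneg h₂ 0)) (pow_nonneg h₃ 10),
    mul_nonneg (mul_nonneg (pow_nonneg h₁ 2) (pow_nonneg h₂ 2)) (pow_nonneg h₃ 8),
    mul_nonneg (mul_nonneg (pow_nonneg h₁ 2) (pow_nonneg h₂ 4)) (pow_nonneg h₃ 6),
    mul_nonneg (mul_nonneg (pow_nonneg h₁ 2) (pow_nonneg h₂ 6)) (pow_nonneg h₃ 4),
    mul_nonneg (mul_nonneg (pow_nonneg h₁ 2) (pow_nonneg h₂ 8)) (pow_nonneg h₃ 2),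
    mul_nonneg (mul_nonneg (pow_nonneg h₁ 2) (pow_nonneg h₂ 10)) (pow_nonneg h₃ 0),
    mul_nonneg (mul_nonneg (pow_nonneg h₁ 4) (pow_nonneg h₂ 0)) (pow_nonneg h₃ 8),
    mul_nonneg (mul_nonneg (pow_nonneg h₁ 4) (pow_nonneg h₂ 2)) (pow_nonneg h₃ 6),
    mul_nonneg (mul_nonneg (pow_nonneg h₁ 4) (pow_nonneg h₂ 4)) (pow_nonneg h₃ 4),
    mul_nonneg (mul_nonneg (pow_nonneg h₁ 4) (pow_nonneg h₂ 6)) (pow_nonneg h₃ 2),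
    mul_nonneg (mul_nonneg (pow_nonneg h₁ 4) (pow_nonneg h₂ 8)) (pow_nonneg h₃ 0),
    mul_nonneg (mul_nonneg (pow_nonneg h₁ 6) (pow_nonneg h₂ 0)) (pow_nonneg h₃ 6),
    mul_nonneg (mul_nonneg (pow_nonneg h₁ 6) (pow_nonneg h₂ 2)) (pow_nonneg h₃ 4),
    mul_nonneg (mul_nonneg (pow_nonneg h₁ 6) (pow_nonneg h₂ 4)) (pow_nonneg h₃ 2),
    mul_nonneg (mul_nonneg (pow_nonneg h₁ 6) (pow_nonneg h₂ 6)) (pow_nonneg h₃ 0),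
    mul_nonneg (mul_nonneg (pow_nonneg h₁ 8) (pow_nonneg h₂ 0)) (pow_nonneg h₃ 4),
    mul_nonneg (mul_nonneg (pow_nonneg h₁ 8) (pow_nonneg h₂ 2)) (pow_nonneg h₃ 2),
    mul_nonneg (mul_nonneg (pow_nonneg h₁ 8) (pow_nonneg h₂ 4)) (pow_nonneg h₃ 0),
    mul_nonneg (mul_nonneg (pow_nonneg h₁ 10) (pow_nonneg h₂ 0)) (pow_nonneg h₃ 2),
    mul_nonneg (mul_nonneg (pow_nonneg h₁ 10) (pow_nonneg h₂ 2)) (pow_nonneg h₃ 0),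
    mul_nonneg (mul_nonneg (pow_nonneg h₁ 12) (pow_nonneg h₂ 0)) (pow_nonneg h₃ 0)]
end
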